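/- arXiv:1901.07472 — 6 statements merged into one kernel-verified Lean document; each statement's English description precedes it below -/
import Mathlib

section
/- Define the weight w on (0,∞) by w(x)=1 for 0<x≤1 and w(x)=e^{−x} for x>1. Then: (a) sup_{r>0} (∫_r^∞ w(x)x^{−2} dx)(∫₀^r w(x)^{−1} dx) < ∞, so w satisfies Muckenhoupt's necessary and sufficient condition for the Hardy operator H₁f(x)=x^{−1}∫₀^x f(y)dy to be bounded on L²(w); but (b) sup_{r>0} (r^{−1}∫₀^r w(x)dx)(r^{−1}∫₀^r w(x)^{−1} dx) = ∞, i.e., w does not belong to A_{2,0}. -/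
open MeasureTheory Set ENNReal Real

noncomputable section

/-- ENNReal-valued Luxemburg norm over `(0,∞)` for `ℝ≥0∞`-valued functions. -/
def eLux (p : ℝ → ℝ) (g : ℝ → ℝ≥0∞) : ℝ≥0∞ :=
  sInf {μ : ℝ≥0∞ | 0 < μ ∧ ∫⁻ x in Ioi (0:ℝ), (g x / μ) ^ (p x) ≤ 1}

/-- Luxemburg norm for real-valued functions on `(0,∞)`. -/
def lux (p : ℝ → ℝ) (f : ℝ → ℝ) : ℝ≥0∞ :=
  eLux p (fun x => ENNReal.ofReal |f x|)

/-- pointwise conjugate exponent, `1/p(x) + 1/p'(x) = 1` -/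
def conj (p : ℝ → ℝ) : ℝ → ℝ := fun x => p x / (p x - 1)

/-- `p(·) ∈ P(0,∞)`: measurable exponent with values in `[1,∞)` and `p⁺ < ∞`. -/
def IsExponent (p : ℝ → ℝ) : Prop :=
  Measurable p ∧ (∀ x ∈ Ioi (0:ℝ), 1 ≤ p x) ∧ BddAbove (p '' Ioi (0:ℝ))

def pMinus (p : ℝ → ℝ) : ℝ := sInf (p '' Ioi (0:ℝ))
def pPlus (p : ℝ → ℝ) : ℝ := sSup (p '' Ioi (0:ℝ))
def pMinusOn (p : ℝ → ℝ) (E : Set ℝ) : ℝ := sInf (p '' E)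
def pPlusOn (p : ℝ → ℝ) (E : Set ℝ) : ℝ := sSup (p '' E)

/-- log-Hölder continuity at the origin. -/
def LH0 (p : ℝ → ℝ) : Prop :=
  ∃ C₀ > (0:ℝ), ∃ p₀ ≥ (1:ℝ), ∀ x ∈ Ioo (0:ℝ) (1/2 : ℝ), |p x - p₀| ≤ C₀ / (-Real.log x)

/-- log-Hölder continuity at infinity with given limit `pinf`. -/
def LHinfWith (p : ℝ → ℝ) (pinf : ℝ) : Prop :=
  ∃ C > (0:ℝ), ∀ x ∈ Ioi (0:ℝ), |p x - pinf| ≤ C / Real.log (Real.exp 1 + x)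

/-- log-Hölder continuity at infinity. -/
def LHinf (p : ℝ → ℝ) : Prop := ∃ pinf ≥ (1:ℝ), LHinfWith p pinf

/-- a weight on `(0,∞)`: non-negative, locally integrable, a.e. positive and finite. -/
def IsWeight (w : ℝ → ℝ) : Prop :=
  Measurable w ∧ (∀ x ∈ Ioi (0:ℝ), 0 ≤ w x) ∧
    (∀ᵐ x ∂(volume.restrict (Ioi (0:ℝ))), 0 < w x) ∧
    LocallyIntegrableOn w (Ioi (0:ℝ))

/-- the class `A_{p(·),q(·),0}` with parameter `λ`. -/
def Apq0 (p q : ℝ → ℝ) (lam : ℝ) (w : ℝ → ℝ) : Prop :=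
  ∃ C > (0:ℝ), ∀ b > (0:ℝ),
    lux q (indicator (Ioo (0:ℝ) b) w) *
      lux (conj p) (indicator (Ioo (0:ℝ) b) (fun y => (w y)⁻¹))
    ≤ ENNReal.ofReal (C * b ^ lam)

/-- the class `A_{p(·),0}`. -/
def Ap0 (p : ℝ → ℝ) (w : ℝ → ℝ) : Prop := Apq0 p p 1 w

/-- the maximal operator `N`. -/
def opN (f : ℝ → ℝ) (x : ℝ) : ℝ≥0∞ :=
  ⨆ (b : ℝ) (_ : x < b), (∫⁻ y in Ioo (0:ℝ) b, ENNReal.ofReal |f y|) / ENNReal.ofReal b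

/-- the generalized Stieltjes transform `S_λ`. -/
def opS (lam : ℝ) (f : ℝ → ℝ) (x : ℝ) : ℝ≥0∞ :=
  ∫⁻ y in Ioi (0:ℝ), ENNReal.ofReal (|f y| / (x + y) ^ lam)

/-- the Hardy operator `H_λ`. -/
def opH (lam : ℝ) (f : ℝ → ℝ) (x : ℝ) : ℝ≥0∞ :=
  (∫⁻ y in Ioo (0:ℝ) x, ENNReal.ofReal |f y|) / ENNReal.ofReal (x ^ lam)

/-- the adjoint Hardy operator `H*_λ`. -/
def opHstar (lam : ℝ) (f : ℝ → ℝ) (x : ℝ) : ℝ≥0∞ :=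
  ∫⁻ y in Ioi x, ENNReal.ofReal (|f y| / y ^ lam)

/-- the generalized Calderón operator `𝒞_λ = H_λ + H*_λ`. -/
def opC (lam : ℝ) (f : ℝ → ℝ) (x : ℝ) : ℝ≥0∞ := opH lam f x + opHstar lam f x

/-- the operator `𝒞^α`, sum of the Riemann–Liouville and Weyl averaging operators. -/
def opCalpha (α : ℝ) (f : ℝ → ℝ) (t : ℝ) : ℝ≥0∞ :=
  ENNReal.ofReal (α + 1) *
      ((∫⁻ x in Ioo (0:ℝ) t, ENNReal.ofReal ((t - x) ^ α * |f x|)) /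
        ENNReal.ofReal (t ^ (α + 1)))
    + ENNReal.ofReal (α + 1) *
        ∫⁻ x in Ioi t, ENNReal.ofReal ((x - t) ^ α / x ^ (α + 1) * |f x|)

/-- the operator `S^α`. -/
def opSalpha (α : ℝ) (f : ℝ → ℝ) (x : ℝ) : ℝ≥0∞ :=
  ∫⁻ t in Ioi (0:ℝ), ENNReal.ofReal (|x - t| ^ α / (x + t) ^ (α + 1) * |f t|)

/-- `T` is of strong type `(p(·),q(·))` with respect to `w`. -/
def StrongType (p q : ℝ → ℝ) (w : ℝ → ℝ) (T : (ℝ → ℝ) → ℝ → ℝ≥0∞) : Prop :=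
  ∃ K > (0:ℝ), ∀ f : ℝ → ℝ, Measurable f → lux p (fun x => f x * w x) ≠ ∞ →
    eLux q (fun x => T f x * ENNReal.ofReal (w x)) ≤
      ENNReal.ofReal K * lux p (fun x => f x * w x)

/-- `T` is of weak type `(p(·),q(·))` with respect to `w`. -/
def WeakType (p q : ℝ → ℝ) (w : ℝ → ℝ) (T : (ℝ → ℝ) → ℝ → ℝ≥0∞) : Prop :=
  ∃ K > (0:ℝ), ∀ f : ℝ → ℝ, Measurable f → lux p (fun x => f x * w x) ≠ ∞ →
    ∀ μ : ℝ, 0 < μ →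
      ENNReal.ofReal μ *
          lux q (indicator {x | ENNReal.ofReal μ < T f x} w) ≤
        ENNReal.ofReal K * lux p (fun x => f x * w x)

/-- the weight `w(x) = 1` for `0 < x ≤ 1`, `w(x) = e^{-x}` for `x > 1`. -/
def w5 : ℝ → ℝ := fun x => if x ≤ 1 then 1 else Real.exp (-x)

/-
For `r ≤ 1` the Muckenhoupt product is at most `r⁻¹ · r`, since `w = 1` on `(0, 1]`. Beyond `1`
the decay of `w` is exactly compensated by the growth of `w⁻¹`: `∫_r^∞ w x⁻² ≤ e^{-r}` while
`∫_0^r w⁻¹ ≤ e^r - 1`. The `A_{2,0}` product instead sees the two averages separately: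
`∫_0^r w ≥ 1` and `∫_0^r w⁻¹ ≥ e^r - e`, so it grows like `e^r / r²`.
-/

theorem ofReal_setIntegral_eq_setLIntegral {α : Type*} [MeasurableSpace α] {μ : Measure α}
    {s : Set α} (hs : MeasurableSet s) {f : α → ℝ}
    (hf : IntegrableOn f s μ) (hf0 : ∀ x ∈ s, 0 ≤ f x) :
    ENNReal.ofReal (∫ x in s, f x ∂μ) = ∫⁻ x in s, ENNReal.ofReal (f x) ∂μ :=
  ofReal_integral_eq_lintegral_ofReal hf ((ae_restrict_iff' hs).2 (ae_of_all _ hf0))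

theorem setLIntegral_Ioi_inv_sq {r : ℝ} (hr : 0 < r) :
    ∫⁻ x in Ioi r, ENNReal.ofReal (x ^ 2)⁻¹ = ENNReal.ofReal r⁻¹ := by
  have hpow : ∀ x ∈ Ioi r, x ^ (-2 : ℝ) = (x ^ 2)⁻¹ := fun x hx => by
    rw [Real.rpow_neg (hr.trans hx).le, Real.rpow_two]
  have hval : ∫ x in Ioi r, x ^ (-2 : ℝ) = r⁻¹ := by
    rw [integral_Ioi_rpow_of_lt (by norm_num) hr]
    norm_num [Real.rpow_neg_one]
  rw [← hval, ofReal_setIntegral_eq_setLIntegral measurableSet_Ioi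
    (integrableOn_Ioi_rpow_of_lt (by norm_num) hr)
    (fun x hx => Real.rpow_nonneg (hr.trans hx).le _)]
  exact setLIntegral_congr_fun measurableSet_Ioi fun x hx => by rw [hpow x hx]

theorem setLIntegral_Ioi_exp_neg (c : ℝ) :
    ∫⁻ x in Ioi c, ENNReal.ofReal (exp (-x)) = ENNReal.ofReal (exp (-c)) := by
  rw [← integral_exp_neg_Ioi c, ofReal_setIntegral_eq_setLIntegral measurableSet_Ioi
    (by simpa using exp_neg_integrableOn_Ioi c one_pos) (fun x _ => (exp_pos _).le)]

theorem setLIntegral_Ioo_exp {a b : ℝ} (hab : a ≤ b) :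
    ∫⁻ x in Ioo a b, ENNReal.ofReal (exp x) = ENNReal.ofReal (exp b - exp a) := by
  rw [← integral_exp, intervalIntegral.integral_of_le hab, integral_Ioc_eq_integral_Ioo,
    ofReal_setIntegral_eq_setLIntegral measurableSet_Ioo
      (Real.continuous_exp.integrableOn_Icc.mono_set Ioo_subset_Icc_self) (fun x _ => (exp_pos _).le)]

theorem setLIntegral_one_Ioo_zero (r : ℝ) :
    ∫⁻ _ in Ioo (0 : ℝ) r, (1 : ℝ≥0∞) = ENNReal.ofReal r := by
  rw [setLIntegral_one, Real.volume_Ioo, sub_zero]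

theorem w5_of_le_one {x : ℝ} (hx : x ≤ 1) : w5 x = 1 := if_pos hx

theorem w5_of_one_lt {x : ℝ} (hx : 1 < x) : w5 x = exp (-x) := if_neg hx.not_ge

theorem w5_le_one (x : ℝ) : w5 x ≤ 1 := by
  rcases le_or_gt x 1 with hx | hx
  · exact (w5_of_le_one hx).le
  · rw [w5_of_one_lt hx, exp_le_one_iff]
    linarith

theorem inv_w5_of_one_lt {x : ℝ} (hx : 1 < x) : (w5 x)⁻¹ = exp x := by
  rw [w5_of_one_lt hx, exp_neg, inv_inv]

theorem inv_w5_le_exp {x : ℝ} (hx : 0 ≤ x) : (w5 x)⁻¹ ≤ exp x := by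
  rcases le_or_gt x 1 with hx1 | hx1
  · simpa [w5_of_le_one hx1] using one_le_exp hx
  · exact (inv_w5_of_one_lt hx1).le

theorem setLIntegral_w5_div_sq_le_inv {r : ℝ} (hr : 0 < r) :
    ∫⁻ x in Ioi r, ENNReal.ofReal (w5 x / x ^ 2) ≤ ENNReal.ofReal r⁻¹ := by
  rw [← setLIntegral_Ioi_inv_sq hr]
  refine setLIntegral_mono' measurableSet_Ioi fun x _ => ENNReal.ofReal_le_ofReal ?_
  simpa [div_eq_mul_inv] using
    mul_le_mul_of_nonneg_right (w5_le_one x) (inv_nonneg.2 (sq_nonneg x))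

theorem setLIntegral_w5_div_sq_le_exp_neg {r : ℝ} (hr : 1 ≤ r) :
    ∫⁻ x in Ioi r, ENNReal.ofReal (w5 x / x ^ 2) ≤ ENNReal.ofReal (exp (-r)) := by
  rw [← setLIntegral_Ioi_exp_neg r]
  refine setLIntegral_mono' measurableSet_Ioi fun x hx => ENNReal.ofReal_le_ofReal ?_
  have hx1 : 1 < x := hr.trans_lt hx
  rw [w5_of_one_lt hx1]
  exact div_le_self (exp_pos _).le (by nlinarith)

theorem setLIntegral_inv_w5_of_le_one {r : ℝ} (hr1 : r ≤ 1) :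
    ∫⁻ x in Ioo (0 : ℝ) r, ENNReal.ofReal (w5 x)⁻¹ = ENNReal.ofReal r := by
  rw [← setLIntegral_one_Ioo_zero r]
  exact setLIntegral_congr_fun measurableSet_Ioo fun x hx => by
    simp [w5_of_le_one (hx.2.le.trans hr1)]

theorem setLIntegral_inv_w5_le {r : ℝ} (hr : 0 ≤ r) :
    ∫⁻ x in Ioo (0 : ℝ) r, ENNReal.ofReal (w5 x)⁻¹ ≤ ENNReal.ofReal (exp r - 1) := by
  rw [← exp_zero, ← setLIntegral_Ioo_exp hr]
  exact setLIntegral_mono' measurableSet_Ioo fun x hx =>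
    ENNReal.ofReal_le_ofReal (inv_w5_le_exp hx.1.le)

theorem one_le_setLIntegral_w5 {r : ℝ} (hr : 1 ≤ r) :
    1 ≤ ∫⁻ x in Ioo (0 : ℝ) r, ENNReal.ofReal (w5 x) :=
  calc (1 : ℝ≥0∞) = ∫⁻ x in Ioo (0 : ℝ) 1, ENNReal.ofReal (w5 x) := by
        rw [← ENNReal.ofReal_one, ← setLIntegral_one_Ioo_zero 1]
        exact setLIntegral_congr_fun measurableSet_Ioo fun x hx => by
          simp [w5_of_le_one hx.2.le]
    _ ≤ ∫⁻ x in Ioo (0 : ℝ) r, ENNReal.ofReal (w5 x) :=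
        lintegral_mono_set (Ioo_subset_Ioo_right hr)

theorem exp_sub_exp_one_le_setLIntegral_inv_w5 {r : ℝ} (hr : 1 ≤ r) :
    ENNReal.ofReal (exp r - exp 1) ≤ ∫⁻ x in Ioo (0 : ℝ) r, ENNReal.ofReal (w5 x)⁻¹ :=
  calc ENNReal.ofReal (exp r - exp 1) = ∫⁻ x in Ioo (1 : ℝ) r, ENNReal.ofReal (w5 x)⁻¹ := by
        rw [← setLIntegral_Ioo_exp hr]
        exact setLIntegral_congr_fun measurableSet_Ioo fun x hx => by rw [inv_w5_of_one_lt hx.1]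
    _ ≤ ∫⁻ x in Ioo (0 : ℝ) r, ENNReal.ofReal (w5 x)⁻¹ :=
        lintegral_mono_set (Ioo_subset_Ioo_left zero_le_one)

theorem muckenhoupt_product_w5_le_one {r : ℝ} (hr : 0 < r) :
    (∫⁻ x in Ioi r, ENNReal.ofReal (w5 x / x ^ 2)) *
      (∫⁻ x in Ioo (0 : ℝ) r, ENNReal.ofReal (w5 x)⁻¹) ≤ ENNReal.ofReal 1 := by
  rcases le_or_gt r 1 with hr1 | hr1
  · calc _ ≤ ENNReal.ofReal r⁻¹ * ENNReal.ofReal r := by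
          rw [setLIntegral_inv_w5_of_le_one hr1]
          exact mul_le_mul_left (setLIntegral_w5_div_sq_le_inv hr) _
      _ = ENNReal.ofReal 1 := by
          rw [← ENNReal.ofReal_mul (inv_nonneg.2 hr.le), inv_mul_cancel₀ hr.ne']
  · calc _ ≤ ENNReal.ofReal (exp (-r)) * ENNReal.ofReal (exp r - 1) :=
          mul_le_mul' (setLIntegral_w5_div_sq_le_exp_neg hr1.le) (setLIntegral_inv_w5_le hr.le)
      _ = ENNReal.ofReal (1 - exp (-r)) := by
          rw [← ENNReal.ofReal_mul (exp_pos _).le, mul_sub, ← exp_add, neg_add_cancel, exp_zero,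
            mul_one]
      _ ≤ ENNReal.ofReal 1 := ENNReal.ofReal_le_ofReal (by linarith [exp_pos (-r)])

theorem exp_sub_exp_one_div_sq_le_averages_product_w5 {r : ℝ} (hr : 1 ≤ r) :
    ENNReal.ofReal ((exp r - exp 1) / r ^ 2) ≤
      ((∫⁻ x in Ioo (0 : ℝ) r, ENNReal.ofReal (w5 x)) / ENNReal.ofReal r) *
        ((∫⁻ x in Ioo (0 : ℝ) r, ENNReal.ofReal (w5 x)⁻¹) / ENNReal.ofReal r) := by
  have hr0 : 0 < r := one_pos.trans_le hr
  calc ENNReal.ofReal ((exp r - exp 1) / r ^ 2)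
      = (1 / ENNReal.ofReal r) * (ENNReal.ofReal (exp r - exp 1) / ENNReal.ofReal r) := by
        rw [← ENNReal.ofReal_one, ← ENNReal.ofReal_div_of_pos hr0,
          ← ENNReal.ofReal_div_of_pos hr0, ← ENNReal.ofReal_mul (by positivity)]
        congr 1
        ring
    _ ≤ _ := by
        gcongr
        · exact one_le_setLIntegral_w5 hr
        · exact exp_sub_exp_one_le_setLIntegral_inv_w5 hr

open Filter Topology

theorem tendsto_exp_sub_div_sq_atTop (c : ℝ) :
    Tendsto (fun r => (exp r - c) / r ^ 2) atTop atTop := by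
  have hc : Tendsto (fun r : ℝ => -c / r ^ 2) atTop (𝓝 0) :=
    tendsto_const_nhds.div_atTop (tendsto_pow_atTop two_ne_zero)
  refine ((tendsto_exp_div_pow_atTop 2).atTop_add hc).congr fun r => ?_
  ring

theorem statement5 :
    (∃ C : ℝ, ∀ r > (0:ℝ),
        (∫⁻ x in Ioi r, ENNReal.ofReal (w5 x / x ^ 2)) *
          (∫⁻ x in Ioo (0:ℝ) r, ENNReal.ofReal (w5 x)⁻¹) ≤ ENNReal.ofReal C) ∧
    (∀ C : ℝ, ∃ r > (0:ℝ),
        ENNReal.ofReal C <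
          ((∫⁻ x in Ioo (0:ℝ) r, ENNReal.ofReal (w5 x)) / ENNReal.ofReal r) *
            ((∫⁻ x in Ioo (0:ℝ) r, ENNReal.ofReal (w5 x)⁻¹) / ENNReal.ofReal r)) := by
  refine ⟨⟨1, fun r hr => muckenhoupt_product_w5_le_one hr⟩, fun C => ?_⟩
  obtain ⟨r, hrC, hr1⟩ := (((tendsto_exp_sub_div_sq_atTop (exp 1)).eventually_gt_atTop
    (max C 0)).and (eventually_ge_atTop 1)).exists
  refine ⟨r, one_pos.trans_le hr1, ?_⟩
  calc ENNReal.ofReal C < ENNReal.ofReal ((exp r - exp 1) / r ^ 2) :=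
        (ENNReal.ofReal_lt_ofReal_iff ((le_max_right C 0).trans_lt hrC)).2
          ((le_max_left C 0).trans_lt hrC)
    _ ≤ _ := exp_sub_exp_one_div_sq_le_averages_product_w5 hr1

end
end

section
/- Let 1<p<∞ and let w be a weight on ℝⁿ such that sup_{b>0} (|B(0,b)|^{−1}∫_{B(0,b)} w dx)(|B(0,b)|^{−1}∫_{B(0,b)} w^{1−p'} dx)^{p−1} < ∞ (the A_{p,0} condition on ℝⁿ), and suppose there exists C₁>0 such that for every k∈ℤ, ess sup_{2^{k−2}≤|x|≤2^{k+1}} w(x) ≤ C₁ ess inf_{2^{k−2}≤|x|≤2^{k+1}} w(x) (w is essentially constant on dyadic annuli). Then w belongs to the Muckenhoupt class A_p, i.e., sup_B (|B|^{−1}∫_B w dx)(|B|^{−1}∫_B w^{1−p'} dx)^{p−1} < ∞, where the supremum is taken over all balls B ⊂ ℝⁿ. -/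
open MeasureTheory Set ENNReal Real

noncomputable section

/-- Euclidean space `ℝⁿ`. -/
abbrev Rn (n : ℕ) := EuclideanSpace ℝ (Fin n)

/-- ENNReal-valued Luxemburg norm on `ℝⁿ` for `ℝ≥0∞`-valued functions. -/
def eLuxRn {n : ℕ} (p : Rn n → ℝ) (g : Rn n → ℝ≥0∞) : ℝ≥0∞ :=
  sInf {μ : ℝ≥0∞ | 0 < μ ∧ ∫⁻ x, (g x / μ) ^ (p x) ≤ 1}

/-- Luxemburg norm for real-valued functions on `ℝⁿ`. -/
def luxRn {n : ℕ} (p : Rn n → ℝ) (f : Rn n → ℝ) : ℝ≥0∞ :=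
  eLuxRn p (fun x => ENNReal.ofReal |f x|)

/-- pointwise conjugate exponent, `1/p(x) + 1/p'(x) = 1`. -/
def conjRn {n : ℕ} (p : Rn n → ℝ) : Rn n → ℝ := fun x => p x / (p x - 1)

/-- `p(·) ∈ P(ℝⁿ)`: measurable exponent with values in `[1,∞)` and `p⁺ < ∞`. -/
def IsExponentRn {n : ℕ} (p : Rn n → ℝ) : Prop :=
  Measurable p ∧ (∀ x, 1 ≤ p x) ∧ BddAbove (Set.range p)

/-- log-Hölder continuity at the origin on `ℝⁿ`. -/
def LH0Rn {n : ℕ} (p : Rn n → ℝ) : Prop :=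
  ∃ C₀ > (0:ℝ), ∃ p₀ ≥ (1:ℝ), ∀ x : Rn n, 0 < ‖x‖ → ‖x‖ < 1/2 →
    |p x - p₀| ≤ C₀ / (-Real.log ‖x‖)

/-- log-Hölder continuity at infinity on `ℝⁿ`. -/
def LHinfRn {n : ℕ} (p : Rn n → ℝ) : Prop :=
  ∃ C > (0:ℝ), ∃ pinf ≥ (1:ℝ), ∀ x : Rn n,
    |p x - pinf| ≤ C / Real.log (Real.exp 1 + ‖x‖)

/-- a weight on `ℝⁿ`: non-negative, locally integrable, a.e. positive and finite. -/
def IsWeightRn {n : ℕ} (w : Rn n → ℝ) : Prop :=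
  Measurable w ∧ (∀ x, 0 ≤ w x) ∧ (∀ᵐ x, 0 < w x) ∧ LocallyIntegrable w

/-- the class `A_{p(·),0}(ℝⁿ)`, defined over the balls centered at the origin. -/
def Ap0Rn {n : ℕ} (p : Rn n → ℝ) (w : Rn n → ℝ) : Prop :=
  ∃ C > (0:ℝ), ∀ b > (0:ℝ),
    luxRn p (indicator (Metric.ball (0 : Rn n) b) w) *
      luxRn (conjRn p) (indicator (Metric.ball (0 : Rn n) b) (fun y => (w y)⁻¹))
    ≤ ENNReal.ofReal (C * b ^ (n : ℕ))

/-- the radial maximal operator `N` on `ℝⁿ`. -/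
def opNRn {n : ℕ} (f : Rn n → ℝ) (x : Rn n) : ℝ≥0∞ :=
  ⨆ (b : ℝ) (_ : ‖x‖ < b),
    (∫⁻ y in Metric.ball (0 : Rn n) b, ENNReal.ofReal |f y|) / ENNReal.ofReal (b ^ (n : ℕ))

/-- the operator `S` on `ℝⁿ`. -/
def opSRn {n : ℕ} (f : Rn n → ℝ) (x : Rn n) : ℝ≥0∞ :=
  ∫⁻ y, ENNReal.ofReal (|f y| / (‖x‖ ^ (n : ℕ) + ‖y‖ ^ (n : ℕ)))

/-- `T` is of strong type `(p(·),p(·))` with respect to `w` on `ℝⁿ`. -/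
def StrongTypeRn {n : ℕ} (p : Rn n → ℝ) (w : Rn n → ℝ)
    (T : (Rn n → ℝ) → Rn n → ℝ≥0∞) : Prop :=
  ∃ K > (0:ℝ), ∀ f : Rn n → ℝ, Measurable f → luxRn p (fun x => f x * w x) ≠ ∞ →
    eLuxRn p (fun x => T f x * ENNReal.ofReal (w x)) ≤
      ENNReal.ofReal K * luxRn p (fun x => f x * w x)

/-! A ball `B(c, r)` with `‖c‖ ≤ 2 r` lies in `B(0, 3 r)`, whose volume is `3ⁿ` times larger, so
its `A_p` product is at most `3 ^ (n p)` times the `A_{p,0}` constant. A ball with `‖c‖ > 2 r`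
lies in a single dyadic annulus, where `w` is essentially between `m` and `M ≤ C₁ m`; there the
product is at most `M / m ≤ C₁`. -/

open Metric Module

def apAverageProduct {α : Type*} [MeasurableSpace α] (μ : Measure α) (p : ℝ) (w : α → ℝ)
    (s : Set α) : ℝ≥0∞ :=
  ((μ s)⁻¹ * ∫⁻ x in s, ENNReal.ofReal (w x) ∂μ) *
    ((μ s)⁻¹ * ∫⁻ x in s, ENNReal.ofReal (w x ^ (1 - p / (p - 1))) ∂μ) ^ (p - 1)

lemma ENNReal.rpow_le_rpow_of_nonpos {a b : ℝ≥0∞} {z : ℝ} (hab : a ≤ b) (hz : z ≤ 0) :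
    b ^ z ≤ a ^ z := by
  have h := ENNReal.inv_le_inv.2 (ENNReal.rpow_le_rpow hab (neg_nonneg.2 hz))
  rwa [← ENNReal.rpow_neg, ← ENNReal.rpow_neg, neg_neg] at h

/-- For `a ≤ 0` the real power `a ^ z` is junk, but then `m = 0` and `m ^ z = ∞`. -/
lemma ENNReal.ofReal_rpow_le_rpow_of_le_ofReal {m : ℝ≥0∞} {a z : ℝ} (hm : m ≤ ENNReal.ofReal a)
    (hz : z < 0) : ENNReal.ofReal (a ^ z) ≤ m ^ z := by
  rcases eq_or_ne m 0 with rfl | hm0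
  · simp [ENNReal.zero_rpow_of_neg hz]
  · have ha : 0 < a := ENNReal.ofReal_pos.1 ((pos_iff_ne_zero.2 hm0).trans_le hm)
    rw [← ENNReal.ofReal_rpow_of_pos ha]
    exact ENNReal.rpow_le_rpow_of_nonpos hm hz.le

section Averages

variable {α : Type*} [MeasurableSpace α] {μ : Measure α} {p : ℝ} {w : α → ℝ} {s t : Set α}

lemma apAverageProduct_le_of_subset (hp : 1 ≤ p) (hst : s ⊆ t) {K : ℝ≥0∞}
    (hK : (μ s)⁻¹ ≤ K * (μ t)⁻¹) :
    apAverageProduct μ p w s ≤ K * K ^ (p - 1) * apAverageProduct μ p w t := by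
  have hp1 : 0 ≤ p - 1 := by linarith
  have hint : ∀ f : α → ℝ≥0∞, (μ s)⁻¹ * ∫⁻ x in s, f x ∂μ ≤ K * ((μ t)⁻¹ * ∫⁻ x in t, f x ∂μ) :=
    fun f => by
      rw [← mul_assoc]
      exact mul_le_mul' hK (lintegral_mono_set hst)
  unfold apAverageProduct
  calc _
      ≤ (K * ((μ t)⁻¹ * ∫⁻ x in t, ENNReal.ofReal (w x) ∂μ)) *
          (K * ((μ t)⁻¹ * ∫⁻ x in t, ENNReal.ofReal (w x ^ (1 - p / (p - 1))) ∂μ)) ^ (p - 1) :=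
        mul_le_mul' (hint _) (ENNReal.rpow_le_rpow (hint _) hp1)
    _ = K * K ^ (p - 1) * apAverageProduct μ p w t := by
        rw [apAverageProduct, ENNReal.mul_rpow_of_nonneg _ _ hp1]
        ring

/-- The two averages are at most `M` and `m ^ (1 - p')`, and `(1 - p') (p - 1) = -1`. -/
lemma apAverageProduct_le_essSup_mul_essInf_inv (hp : 1 < p) (hst : s ⊆ t) (hs₀ : μ s ≠ 0)
    (hs : μ s ≠ ∞) :
    apAverageProduct μ p w s ≤
      essSup (fun x => ENNReal.ofReal (w x)) (μ.restrict t) *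
        (essInf (fun x => ENNReal.ofReal (w x)) (μ.restrict t))⁻¹ := by
  set M := essSup (fun x => ENNReal.ofReal (w x)) (μ.restrict t)
  set m := essInf (fun x => ENNReal.ofReal (w x)) (μ.restrict t)
  set e := 1 - p / (p - 1)
  have hp1 : 0 < p - 1 := by linarith
  have he : e * (p - 1) = -1 := by
    simp only [e, sub_mul, one_mul, div_mul_cancel₀ _ hp1.ne']
    ring
  have he_neg : e < 0 := by nlinarith
  have hae : ae (μ.restrict s) ≤ ae (μ.restrict t) := ae_mono (Measure.restrict_mono hst le_rfl)
  have hM : ∫⁻ x in s, ENNReal.ofReal (w x) ∂μ ≤ M * μ s := by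
    rw [← setLIntegral_const]
    exact lintegral_mono_ae ((ENNReal.ae_le_essSup _).filter_mono hae)
  have hm : ∫⁻ x in s, ENNReal.ofReal (w x ^ e) ∂μ ≤ m ^ e * μ s := by
    rw [← setLIntegral_const]
    refine lintegral_mono_ae ?_
    filter_upwards [(ae_essInf_le (f := fun x => ENNReal.ofReal (w x))).filter_mono hae]
      with x hx
    exact ENNReal.ofReal_rpow_le_rpow_of_le_ofReal hx he_neg
  have hcancel : ∀ a : ℝ≥0∞, (μ s)⁻¹ * (a * μ s) = a := fun a => by
    rw [mul_comm a, ← mul_assoc, ENNReal.inv_mul_cancel hs₀ hs, one_mul]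
  calc apAverageProduct μ p w s
      = ((μ s)⁻¹ * ∫⁻ x in s, ENNReal.ofReal (w x) ∂μ) *
          ((μ s)⁻¹ * ∫⁻ x in s, ENNReal.ofReal (w x ^ e) ∂μ) ^ (p - 1) := rfl
    _ ≤ ((μ s)⁻¹ * (M * μ s)) * ((μ s)⁻¹ * (m ^ e * μ s)) ^ (p - 1) :=
        mul_le_mul' (mul_le_mul_right hM _)
          (ENNReal.rpow_le_rpow (mul_le_mul_right hm _) hp1.le)
    _ = M * m⁻¹ := by
        rw [hcancel, hcancel, ← ENNReal.rpow_mul, he, ENNReal.rpow_neg_one]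

end Averages

section Balls

variable {E : Type*} [NormedAddCommGroup E] [NormedSpace ℝ E] [MeasurableSpace E] [BorelSpace E]
  [FiniteDimensional ℝ E] (μ : Measure E) [μ.IsAddHaarMeasure]

lemma inv_measure_ball_eq_mul_inv_measure_ball_mul (x y : E) {a r : ℝ} (ha : 0 < a) :
    (μ (ball x r))⁻¹ = ENNReal.ofReal (a ^ finrank ℝ E) * (μ (ball y (a * r)))⁻¹ := by
  have hK₀ : ENNReal.ofReal (a ^ finrank ℝ E) ≠ 0 := (ENNReal.ofReal_pos.2 (by positivity)).ne'
  rw [Measure.addHaar_ball_mul_of_pos μ y ha, ← Measure.addHaar_ball_center μ x,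
    ENNReal.mul_inv (Or.inl hK₀) (Or.inl ENNReal.ofReal_ne_top), ← mul_assoc,
    ENNReal.mul_inv_cancel hK₀ ENNReal.ofReal_ne_top, one_mul]

lemma apAverageProduct_ball_le_of_norm_le {p : ℝ} (hp : 1 ≤ p) (w : E → ℝ) {c : E} {r : ℝ}
    (hc : ‖c‖ ≤ 2 * r) :
    apAverageProduct μ p w (ball c r) ≤
      ENNReal.ofReal (3 ^ finrank ℝ E) * ENNReal.ofReal (3 ^ finrank ℝ E) ^ (p - 1) *
        apAverageProduct μ p w (ball 0 (3 * r)) :=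
  apAverageProduct_le_of_subset hp
    (Metric.ball_subset_ball' (by rw [dist_zero_right]; linarith))
    (inv_measure_ball_eq_mul_inv_measure_ball_mul μ c 0 three_pos).le

end Balls

/-- The witness is the `k` with `‖c‖ ∈ [2 ^ (k - 1), 2 ^ k)`. -/
lemma exists_ball_subset_dyadicAnnulus {E : Type*} [SeminormedAddCommGroup E] {c : E} {r : ℝ}
    (hr : 0 < r) (hc : 2 * r < ‖c‖) :
    ∃ k : ℤ, ball c r ⊆ {x : E | (2:ℝ) ^ (k - 2) ≤ ‖x‖ ∧ ‖x‖ ≤ (2:ℝ) ^ (k + 1)} := by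
  obtain ⟨n, hnl, hnu⟩ := _root_.exists_mem_Ico_zpow (x := ‖c‖) (by linarith) one_lt_two
  refine ⟨n + 1, fun x hx => ?_⟩
  have hdist := abs_le.1 (abs_norm_sub_norm_le x c)
  rw [mem_ball, dist_eq_norm] at hx
  have hlow : (2:ℝ) ^ (n + 1 - 2) = 2 ^ n / 2 := by
    rw [show n + 1 - 2 = n - 1 by ring, zpow_sub_one₀ two_ne_zero, div_eq_mul_inv]
  have hup : (2:ℝ) ^ (n + 1 + 1) = 2 ^ n * 4 := by
    rw [zpow_add_one₀ two_ne_zero, zpow_add_one₀ two_ne_zero]; ring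
  rw [zpow_add_one₀ two_ne_zero] at hnu
  rw [hlow, hup]
  constructor <;> linarith [hdist.1, hdist.2]

theorem statement6_general (n : ℕ) (p : ℝ) (hp : 1 < p) (w : Rn n → ℝ)
    (hA : ∃ C : ℝ, ∀ b > (0:ℝ),
        ((volume (Metric.ball (0 : Rn n) b))⁻¹ *
            ∫⁻ x in Metric.ball (0 : Rn n) b, ENNReal.ofReal (w x)) *
          ((volume (Metric.ball (0 : Rn n) b))⁻¹ *
              ∫⁻ x in Metric.ball (0 : Rn n) b,
                ENNReal.ofReal (w x ^ (1 - p / (p - 1)))) ^ (p - 1) ≤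
          ENNReal.ofReal C)
    (hann : ∃ C₁ > (0:ℝ), ∀ k : ℤ,
        essSup (fun x => ENNReal.ofReal (w x))
            (volume.restrict {x : Rn n | (2:ℝ) ^ (k - 2) ≤ ‖x‖ ∧ ‖x‖ ≤ (2:ℝ) ^ (k + 1)}) ≤
          ENNReal.ofReal C₁ *
            essInf (fun x => ENNReal.ofReal (w x))
              (volume.restrict {x : Rn n | (2:ℝ) ^ (k - 2) ≤ ‖x‖ ∧ ‖x‖ ≤ (2:ℝ) ^ (k + 1)})) :
    ∃ C : ℝ, ∀ (c : Rn n) (r : ℝ), 0 < r →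
      ((volume (Metric.ball c r))⁻¹ * ∫⁻ x in Metric.ball c r, ENNReal.ofReal (w x)) *
        ((volume (Metric.ball c r))⁻¹ *
            ∫⁻ x in Metric.ball c r, ENNReal.ofReal (w x ^ (1 - p / (p - 1)))) ^ (p - 1) ≤
        ENNReal.ofReal C := by
  obtain ⟨C₀, hC₀⟩ := hA
  obtain ⟨C₁, -, hC₁⟩ := hann
  set d := finrank ℝ (Rn n)
  refine ⟨max ((3:ℝ) ^ d * ((3:ℝ) ^ d) ^ (p - 1) * C₀) C₁, fun c r hr => ?_⟩
  change apAverageProduct volume p w (ball c r) ≤ _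
  rcases le_or_gt ‖c‖ (2 * r) with hc | hc
  · calc apAverageProduct volume p w (ball c r)
        ≤ ENNReal.ofReal (3 ^ d) * ENNReal.ofReal (3 ^ d) ^ (p - 1) * ENNReal.ofReal C₀ :=
          (apAverageProduct_ball_le_of_norm_le volume hp.le w hc).trans
            (mul_le_mul_right (hC₀ (3 * r) (by positivity)) _)
      _ = ENNReal.ofReal ((3:ℝ) ^ d * ((3:ℝ) ^ d) ^ (p - 1) * C₀) := by
          rw [ENNReal.ofReal_rpow_of_pos (by positivity), ← ENNReal.ofReal_mul (by positivity),
            ← ENNReal.ofReal_mul (by positivity)]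
      _ ≤ _ := ENNReal.ofReal_le_ofReal (le_max_left _ _)
  · obtain ⟨k, hk⟩ := exists_ball_subset_dyadicAnnulus hr hc
    calc apAverageProduct volume p w (ball c r)
        ≤ _ := apAverageProduct_le_essSup_mul_essInf_inv hp hk (measure_ball_pos volume c hr).ne'
          measure_ball_lt_top.ne
      _ ≤ ENNReal.ofReal C₁ := ENNReal.div_le_of_le_mul (hC₁ k)
      _ ≤ _ := ENNReal.ofReal_le_ofReal (le_max_right _ _)

theorem statement6 (n : ℕ) (p : ℝ) (hp : 1 < p) (w : Rn n → ℝ) (hw : IsWeightRn w)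
    (hA : ∃ C : ℝ, ∀ b > (0:ℝ),
        ((volume (Metric.ball (0 : Rn n) b))⁻¹ *
            ∫⁻ x in Metric.ball (0 : Rn n) b, ENNReal.ofReal (w x)) *
          ((volume (Metric.ball (0 : Rn n) b))⁻¹ *
              ∫⁻ x in Metric.ball (0 : Rn n) b,
                ENNReal.ofReal (w x ^ (1 - p / (p - 1)))) ^ (p - 1) ≤
          ENNReal.ofReal C)
    (hann : ∃ C₁ > (0:ℝ), ∀ k : ℤ,
        essSup (fun x => ENNReal.ofReal (w x))
            (volume.restrict {x : Rn n | (2:ℝ) ^ (k - 2) ≤ ‖x‖ ∧ ‖x‖ ≤ (2:ℝ) ^ (k + 1)}) ≤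
          ENNReal.ofReal C₁ *
            essInf (fun x => ENNReal.ofReal (w x))
              (volume.restrict {x : Rn n | (2:ℝ) ^ (k - 2) ≤ ‖x‖ ∧ ‖x‖ ≤ (2:ℝ) ^ (k + 1)})) :
    ∃ C : ℝ, ∀ (c : Rn n) (r : ℝ), 0 < r →
      ((volume (Metric.ball c r))⁻¹ * ∫⁻ x in Metric.ball c r, ENNReal.ofReal (w x)) *
        ((volume (Metric.ball c r))⁻¹ *
            ∫⁻ x in Metric.ball c r, ENNReal.ofReal (w x ^ (1 - p / (p - 1)))) ^ (p - 1) ≤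
        ENNReal.ofReal C :=
  statement6_general n p hp w hA hann

end
end

section
/- Let p(·) ∈ P(0,∞) with p(·) ∈ LH₀(0,∞) and 1 < p⁻ ≤ p⁺ < ∞, and let w be a weight on (0,∞) with w ∈ A_{p(·),0}. Then there exists a constant C₀>0, depending only on p(·) and w, such that for every b>0, ‖wχ_{(0,b)}‖_{p(·)}^{p⁻_{(0,b)} − p⁺_{(0,b)}} ≤ C₀, where p⁻_{(0,b)} = inf_{(0,b)} p and p⁺_{(0,b)} = sup_{(0,b)} p. -/
open MeasureTheory Set ENNReal Real

noncomputable section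

/-!
For `b ≤ 1/2`, Young's inequality `s t ≤ s ^ p(x) + t ^ p'(x)` applied to `s = w / λ`,
`t = w⁻¹ / μ` and integrated over `(0,b)` gives `b ≤ 2 ‖w χ_(0,b)‖_{p(·)} ‖w⁻¹ χ_(0,b)‖_{p'(·)}`.
The `A_{p(·),0}` condition at `b = 1/2`, together with `‖w χ_(0,1/2)‖_{p(·)} > 0`, makes
`‖w⁻¹ χ_(0,1/2)‖_{p'(·)}` finite, so `‖w χ_(0,b)‖_{p(·)} ≥ min(b, 1/2) / K` for all `b > 0`.
The exponent `p⁻_(0,b) - p⁺_(0,b) ≤ 0` is bounded below by `1 - p⁺`, and by log-Hölder continuity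
at the origin it is `O(1 / |log b|)` for small `b`; hence `(min(b, 1/2) / K) ^ (p⁻_(0,b) - p⁺_(0,b))`
stays bounded.
-/

section

variable {p w : ℝ → ℝ}

lemma conj_nonneg {x : ℝ} (hx : 1 < p x) : 0 ≤ conj p x :=
  div_nonneg (by linarith) (by linarith)

lemma ENNReal.mul_le_rpow_add_rpow_conj {x : ℝ} (hx : 1 < p x) (a b : ℝ≥0∞) :
    a * b ≤ a ^ p x + b ^ conj p x := by
  have hpq : (p x).HolderConjugate (conj p x) := Real.HolderConjugate.conjExponent hx
  calc a * b ≤ a ^ p x / ENNReal.ofReal (p x) + b ^ conj p x / ENNReal.ofReal (conj p x) :=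
        ENNReal.young_inequality a b hpq
    _ ≤ a ^ p x + b ^ conj p x := by
      gcongr <;> refine (ENNReal.div_le_div_left ?_ _).trans_eq (div_one _) <;>
        exact ENNReal.one_le_ofReal.mpr (by linarith [hpq.lt, hpq.symm.lt])

lemma modular_anti (hp : ∀ x ∈ Ioi (0:ℝ), 0 ≤ p x) (g : ℝ → ℝ≥0∞) {μ ν : ℝ≥0∞} (h : μ ≤ ν) :
    ∫⁻ x in Ioi (0:ℝ), (g x / ν) ^ p x ≤ ∫⁻ x in Ioi (0:ℝ), (g x / μ) ^ p x := by
  refine setLIntegral_mono_ae' measurableSet_Ioi (ae_of_all _ fun x hx => ?_)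
  exact ENNReal.rpow_le_rpow (ENNReal.div_le_div le_rfl h) (hp x hx)

lemma eLux_mono (hp : ∀ x ∈ Ioi (0:ℝ), 0 ≤ p x) {g g' : ℝ → ℝ≥0∞} (h : ∀ x, g x ≤ g' x) :
    eLux p g ≤ eLux p g' := by
  refine sInf_le_sInf fun μ ⟨hμ0, hμ1⟩ => ⟨hμ0, le_trans ?_ hμ1⟩
  refine setLIntegral_mono_ae' measurableSet_Ioi (ae_of_all _ fun x hx => ?_)
  exact ENNReal.rpow_le_rpow (ENNReal.div_le_div (h x) le_rfl) (hp x hx)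

lemma modular_le_one_of_eLux_lt (hp : ∀ x ∈ Ioi (0:ℝ), 0 ≤ p x) {g : ℝ → ℝ≥0∞} {μ : ℝ≥0∞}
    (h : eLux p g < μ) : ∫⁻ x in Ioi (0:ℝ), (g x / μ) ^ p x ≤ 1 := by
  obtain ⟨ν, hν, hνμ⟩ := sInf_lt_iff.mp h
  exact (modular_anti hp g hνμ.le).trans hν.2

lemma lux_indicator_Ioo_mono (hp : ∀ x ∈ Ioi (0:ℝ), 0 ≤ p x) (u : ℝ → ℝ) {b b' : ℝ}
    (hb : b ≤ b') : lux p (indicator (Ioo 0 b) u) ≤ lux p (indicator (Ioo 0 b') u) := by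
  refine eLux_mono hp fun x => ?_
  by_cases hx : x ∈ Ioo 0 b
  · rw [indicator_of_mem hx, indicator_of_mem (Ioo_subset_Ioo_right hb hx)]
  · simp [indicator_of_notMem hx]

lemma mul_volume_le_eLux (hp : ∀ x ∈ Ioi (0:ℝ), 1 ≤ p x) {g : ℝ → ℝ≥0∞} {E : Set ℝ}
    (hE : MeasurableSet E) (hE0 : E ⊆ Ioi 0) (hE1 : volume E ≤ 1) {δ : ℝ≥0∞}
    (hδ : ∀ x ∈ E, δ ≤ g x) : δ * volume E ≤ eLux p g := by
  refine le_sInf fun ν ⟨hν0, hν1⟩ => ?_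
  rcases le_or_gt δ ν with hδν | hνδ
  · exact (mul_le_of_le_one_right' hE1).trans hδν
  have hνtop : ν ≠ ∞ := hνδ.ne_top
  have hmod : δ / ν * volume E ≤ 1 := calc
    δ / ν * volume E = ∫⁻ _ in E, δ / ν := (setLIntegral_const E _).symm
    _ ≤ ∫⁻ x in E, (g x / ν) ^ p x := by
      refine setLIntegral_mono_ae' hE (ae_of_all _ fun x hx => ?_)
      have hg : δ / ν ≤ g x / ν := ENNReal.div_le_div_right (hδ x hx) ν
      have hg1 : 1 ≤ g x / ν := le_trans (by
        rw [ENNReal.le_div_iff_mul_le (.inl hν0.ne') (.inl hνtop), one_mul]; exact hνδ.le) hg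
      calc δ / ν ≤ (g x / ν) ^ (1:ℝ) := by rwa [ENNReal.rpow_one]
        _ ≤ (g x / ν) ^ p x := ENNReal.rpow_le_rpow_of_exponent_le hg1 (hp x (hE0 hx))
    _ ≤ 1 := (lintegral_mono_set hE0).trans hν1
  rw [← ENNReal.mul_div_right_comm, ENNReal.div_le_iff hν0.ne' hνtop, one_mul] at hmod
  exact hmod

lemma lintegral_mul_div_le_eLux (hpm : Measurable p) (hp : ∀ x ∈ Ioi (0:ℝ), 1 < p x)
    {f g : ℝ → ℝ≥0∞} (hf : Measurable f) {μ : ℝ≥0∞} (hμ : eLux (conj p) g < μ) (hμtop : μ ≠ ∞) :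
    (∫⁻ x in Ioi (0:ℝ), f x * g x) / (2 * μ) ≤ eLux p f := by
  have hμ0 : μ ≠ 0 := (hμ.trans_le' bot_le).ne'
  have hg : ∫⁻ x in Ioi (0:ℝ), (g x / μ) ^ conj p x ≤ 1 :=
    modular_le_one_of_eLux_lt (fun x hx => conj_nonneg (hp x hx)) hμ
  refine le_sInf fun ν ⟨hν0, hf1⟩ => ?_
  rcases eq_or_ne ν ∞ with rfl | hνtop
  · exact le_top
  have hνμ : ν * μ ≠ ∞ := ENNReal.mul_ne_top hνtop hμtop
  have hfg : ∀ x, f x * g x = ν * μ * (f x / ν * (g x / μ)) := fun x => by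
    rw [mul_mul_mul_comm, ENNReal.mul_div_cancel hν0.ne' hνtop,
      ENNReal.mul_div_cancel hμ0 hμtop]
  calc (∫⁻ x in Ioi (0:ℝ), f x * g x) / (2 * μ)
      = ν * μ * (∫⁻ x in Ioi (0:ℝ), f x / ν * (g x / μ)) / (2 * μ) := by
        simp_rw [hfg, lintegral_const_mul' _ _ hνμ]
    _ ≤ ν * μ * 2 / (2 * μ) := by
        gcongr
        calc ∫⁻ x in Ioi (0:ℝ), f x / ν * (g x / μ)
            ≤ ∫⁻ x in Ioi (0:ℝ), (f x / ν) ^ p x + (g x / μ) ^ conj p x :=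
              setLIntegral_mono_ae' measurableSet_Ioi (ae_of_all _ fun x hx =>
                ENNReal.mul_le_rpow_add_rpow_conj (hp x hx) _ _)
          _ ≤ 1 + 1 := by
              rw [lintegral_add_left ((hf.div_const ν).pow hpm)]
              exact add_le_add hf1 hg
          _ = 2 := one_add_one_eq_two
    _ = ν := by
        rw [mul_assoc, mul_comm μ, ENNReal.mul_div_cancel_right (by simp [hμ0])
          (ENNReal.mul_ne_top ENNReal.ofNat_ne_top hμtop)]

lemma exists_volume_setOf_lt_inter_Ioo_ne_zero
    (hw : ∀ᵐ x ∂(volume.restrict (Ioi (0:ℝ))), 0 < w x) {c : ℝ} (hc : 0 < c) :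
    ∃ δ > (0:ℝ), volume ({x | δ < w x} ∩ Ioo 0 c) ≠ 0 := by
  by_contra! h
  have hsmall : ∀ᵐ x ∂(volume.restrict (Ioo 0 c)), ∀ n : ℕ, w x ≤ 1 / (n + 1) := by
    refine ae_all_iff.mpr fun n => ?_
    have hn := h (1 / (n + 1)) (by positivity)
    rw [← Measure.restrict_apply' measurableSet_Ioo, measure_eq_zero_iff_ae_notMem] at hn
    filter_upwards [hn] with x hx
    simpa using hx
  have hfalse : ∀ᵐ x ∂(volume.restrict (Ioo 0 c)), False := by
    filter_upwards [hsmall, ae_restrict_of_ae_restrict_of_subset Ioo_subset_Ioi_self hw]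
      with x hsmall hpos
    obtain ⟨n, hn⟩ := exists_nat_one_div_lt hpos
    linarith [hsmall n]
  simpa [hc.not_ge] using ae_restrict_eq_bot.mp (Filter.eventually_false_iff_eq_bot.mp hfalse)

lemma lux_indicator_Ioo_pos (hp : ∀ x ∈ Ioi (0:ℝ), 1 ≤ p x) (hwm : Measurable w)
    (hw : ∀ᵐ x ∂(volume.restrict (Ioi (0:ℝ))), 0 < w x) {c : ℝ} (hc0 : 0 < c) (hc1 : c ≤ 1) :
    0 < lux p (indicator (Ioo 0 c) w) := by
  obtain ⟨δ, hδ, hE⟩ := exists_volume_setOf_lt_inter_Ioo_ne_zero hw hc0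
  have hE1 : volume ({x | δ < w x} ∩ Ioo 0 c) ≤ 1 := calc
    _ ≤ volume (Ioo 0 c) := measure_mono inter_subset_right
    _ ≤ 1 := by simpa using hc1
  refine lt_of_lt_of_le ?_ (mul_volume_le_eLux hp
    ((measurableSet_lt measurable_const hwm).inter measurableSet_Ioo)
    (inter_subset_right.trans Ioo_subset_Ioi_self) hE1 (δ := ENNReal.ofReal δ) ?_)
  · exact ENNReal.mul_pos (ENNReal.ofReal_pos.mpr hδ).ne' hE
  · rintro x ⟨hδx, hx⟩
    rw [indicator_of_mem hx]
    exact ENNReal.ofReal_le_ofReal (hδx.le.trans (le_abs_self _))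

lemma le_lux_indicator_of_lux_inv_lt (hpm : Measurable p)
    (hp : ∀ x ∈ Ioi (0:ℝ), 1 < p x) (hwm : Measurable w)
    (hw : ∀ᵐ x ∂(volume.restrict (Ioi (0:ℝ))), 0 < w x) {b : ℝ} {μ : ℝ≥0∞}
    (hμ : lux (conj p) (indicator (Ioo 0 b) fun y => (w y)⁻¹) < μ) (hμtop : μ ≠ ∞) :
    ENNReal.ofReal b / (2 * μ) ≤ lux p (indicator (Ioo 0 b) w) := by
  have hprod : ∀ᵐ x ∂(volume.restrict (Ioi (0:ℝ))),
      ENNReal.ofReal |indicator (Ioo 0 b) w x| *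
        ENNReal.ofReal |indicator (Ioo 0 b) (fun y => (w y)⁻¹) x| = indicator (Ioo 0 b) 1 x := by
    filter_upwards [hw] with x hwx
    by_cases hx : x ∈ Ioo 0 b
    · simp only [indicator_of_mem hx, abs_of_pos hwx, abs_of_pos (inv_pos.mpr hwx),
        ← ENNReal.ofReal_mul hwx.le, mul_inv_cancel₀ hwx.ne', ENNReal.ofReal_one, Pi.one_apply]
    · simp [indicator_of_notMem hx]
  have hint : ∫⁻ x in Ioi (0:ℝ), indicator (Ioo 0 b) 1 x = ENNReal.ofReal b := by
    rw [lintegral_indicator_one measurableSet_Ioo, Measure.restrict_apply measurableSet_Ioo,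
      inter_eq_left.mpr Ioo_subset_Ioi_self, Real.volume_Ioo, sub_zero]
  have := lintegral_mul_div_le_eLux hpm hp
    (hwm.indicator (measurableSet_Ioo (a := 0) (b := b))).abs.ennreal_ofReal hμ hμtop
  rwa [lintegral_congr_ae hprod, hint] at this

lemma Ap0.exists_le_lux_indicator (hpm : Measurable p)
    (hp : ∀ x ∈ Ioi (0:ℝ), 1 < p x) (hwm : Measurable w)
    (hw : ∀ᵐ x ∂(volume.restrict (Ioi (0:ℝ))), 0 < w x) (hA : Ap0 p w) :
    ∃ K > (0:ℝ), ∀ b, ENNReal.ofReal (min b (1/2) / K) ≤ lux p (indicator (Ioo 0 b) w) := by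
  obtain ⟨C, -, hC⟩ := hA
  set M := lux (conj p) (indicator (Ioo 0 (1/2)) fun y => (w y)⁻¹)
  have hL : 0 < lux p (indicator (Ioo 0 (1/2)) w) :=
    lux_indicator_Ioo_pos (fun x hx => (hp x hx).le) hwm hw (by norm_num) (by norm_num)
  have hM : M ≠ ∞ := fun hM => by
    have : _ * M ≤ _ := hC (1/2) (by norm_num)
    rw [hM, ENNReal.mul_top hL.ne', top_le_iff] at this
    exact ENNReal.ofReal_ne_top this
  have hM1 : M + 1 ≠ ∞ := ENNReal.add_ne_top.mpr ⟨hM, ENNReal.one_ne_top⟩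
  have hK : 2 * (M + 1) ≠ ∞ := ENNReal.mul_ne_top ENNReal.ofNat_ne_top hM1
  have hKpos : 0 < (2 * (M + 1)).toReal := ENNReal.toReal_pos (by simp) hK
  refine ⟨(2 * (M + 1)).toReal, hKpos, fun b => ?_⟩
  calc ENNReal.ofReal (min b (1/2) / (2 * (M + 1)).toReal)
      = ENNReal.ofReal (min b (1/2)) / (2 * (M + 1)) := by
        rw [ENNReal.ofReal_div_of_pos hKpos, ENNReal.ofReal_toReal hK]
    _ ≤ lux p (indicator (Ioo 0 (min b (1/2))) w) :=
        le_lux_indicator_of_lux_inv_lt hpm hp hwm hw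
          ((lux_indicator_Ioo_mono (fun x hx => conj_nonneg (hp x hx)) _
            (min_le_right _ _)).trans_lt (ENNReal.lt_add_right hM one_ne_zero)) hM1
    _ ≤ lux p (indicator (Ioo 0 b) w) :=
        lux_indicator_Ioo_mono (fun x hx => (zero_lt_one.trans (hp x hx)).le) _ (min_le_left _ _)

lemma ENNReal.rpow_neg_le_ofReal_exp {x : ℝ≥0∞} {r e : ℝ} (hr : 0 < r) (he : 0 ≤ e)
    (hx : ENNReal.ofReal r ≤ x) : x ^ (-e) ≤ ENNReal.ofReal (exp (e * -Real.log r)) := calc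
  x ^ (-e) ≤ ENNReal.ofReal r ^ (-e) := by
    rw [ENNReal.rpow_neg, ENNReal.rpow_neg]
    exact ENNReal.inv_le_inv.mpr (ENNReal.rpow_le_rpow hx he)
  _ = ENNReal.ofReal (exp (e * -Real.log r)) := by
    rw [ENNReal.ofReal_rpow_of_pos hr, rpow_def_of_pos hr, mul_neg, mul_neg, mul_comm]

def oscOn (p : ℝ → ℝ) (E : Set ℝ) : ℝ := pPlusOn p E - pMinusOn p E

lemma IsExponent.bddBelow_image (hp : IsExponent p) {E : Set ℝ} (hE : E ⊆ Ioi 0) :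
    BddBelow (p '' E) :=
  ⟨1, by rintro _ ⟨x, hx, rfl⟩; exact hp.2.1 x (hE hx)⟩

lemma IsExponent.one_lt_of_one_lt_pMinus (hp : IsExponent p) (hpm : 1 < pMinus p) :
    ∀ x ∈ Ioi (0:ℝ), 1 < p x :=
  fun x hx => hpm.trans_le (csInf_le (hp.bddBelow_image subset_rfl) ⟨x, hx, rfl⟩)

lemma IsExponent.oscOn_nonneg (hp : IsExponent p) {E : Set ℝ} (hE : E ⊆ Ioi 0)
    (hne : E.Nonempty) : 0 ≤ oscOn p E :=
  sub_nonneg.mpr <| csInf_le_csSup (hne.image p) (hp.bddBelow_image hE)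
    (hp.2.2.mono (image_mono hE))

lemma IsExponent.oscOn_le (hp : IsExponent p) {E : Set ℝ} (hE : E ⊆ Ioi 0)
    (hne : E.Nonempty) : oscOn p E ≤ pPlus p - 1 := by
  have hsup : pPlusOn p E ≤ pPlus p := csSup_le_csSup hp.2.2 (hne.image p) (image_mono hE)
  have hinf : 1 ≤ pMinusOn p E :=
    le_csInf (hne.image p) (by rintro _ ⟨x, hx, rfl⟩; exact hp.2.1 x (hE hx))
  unfold oscOn
  linarith

lemma oscOn_le_of_abs_sub_le {E : Set ℝ} (hne : E.Nonempty) {q ε : ℝ}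
    (h : ∀ x ∈ E, |p x - q| ≤ ε) : oscOn p E ≤ 2 * ε := by
  have hsup : pPlusOn p E ≤ q + ε :=
    csSup_le (hne.image p) (by rintro _ ⟨x, hx, rfl⟩; linarith [(abs_le.mp (h x hx)).2])
  have hinf : q - ε ≤ pMinusOn p E :=
    le_csInf (hne.image p) (by rintro _ ⟨x, hx, rfl⟩; linarith [(abs_le.mp (h x hx)).1])
  unfold oscOn
  linarith

lemma LH0.exists_oscOn_mul_neg_log_le (hp : IsExponent p) (h0 : LH0 p) :
    ∃ A, ∀ b > (0:ℝ), oscOn p (Ioo 0 b) * -Real.log (min b (1/2)) ≤ A := by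
  obtain ⟨C, hC, q, -, hq⟩ := h0
  have hpPlus : 0 ≤ pPlus p - 1 := by
    have h1 : (1:ℝ) ∈ Ioi 0 := mem_Ioi.mpr one_pos
    exact sub_nonneg.mpr ((hp.2.1 1 h1).trans (le_csSup hp.2.2 ⟨1, h1, rfl⟩))
  refine ⟨2 * C + (pPlus p - 1) * Real.log 2, fun b hb => ?_⟩
  have hne : (Ioo 0 b).Nonempty := nonempty_Ioo.mpr hb
  rcases lt_or_ge b (1/2) with hb2 | hb2
  · have hlog : 0 < -Real.log b := neg_pos.mpr (Real.log_neg hb (by linarith))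
    have hosc : oscOn p (Ioo 0 b) ≤ 2 * (C / -Real.log b) := by
      refine oscOn_le_of_abs_sub_le hne fun x hx => (hq x ⟨hx.1, hx.2.trans hb2⟩).trans ?_
      exact div_le_div_of_nonneg_left hC.le hlog (by linarith [Real.log_le_log hx.1 hx.2.le])
    rw [min_eq_left hb2.le]
    calc oscOn p (Ioo 0 b) * -Real.log b ≤ 2 * (C / -Real.log b) * -Real.log b := by gcongr
      _ = 2 * C := by rw [mul_assoc, div_mul_cancel₀ _ hlog.ne']
      _ ≤ 2 * C + (pPlus p - 1) * Real.log 2 := le_add_of_nonneg_right (by positivity)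
  · rw [min_eq_right hb2, one_div, Real.log_inv, neg_neg]
    calc oscOn p (Ioo 0 b) * Real.log 2 ≤ (pPlus p - 1) * Real.log 2 := by
          gcongr; exact hp.oscOn_le Ioo_subset_Ioi_self hne
      _ ≤ 2 * C + (pPlus p - 1) * Real.log 2 := le_add_of_nonneg_left (by positivity)

end

theorem statement9 (p w : ℝ → ℝ) (hp : IsExponent p) (h0 : LH0 p) (hpm : 1 < pMinus p)
    (hw : IsWeight w) (hA : Ap0 p w) :
    ∃ C₀ > (0:ℝ), ∀ b > (0:ℝ),
      (lux p (indicator (Ioo (0:ℝ) b) w)) ^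
          (pMinusOn p (Ioo (0:ℝ) b) - pPlusOn p (Ioo (0:ℝ) b)) ≤
        ENNReal.ofReal C₀ := by
  obtain ⟨K, hK, hlux⟩ :=
    hA.exists_le_lux_indicator hp.1 (hp.one_lt_of_one_lt_pMinus hpm) hw.1 hw.2.2.1
  obtain ⟨A, hosc⟩ := h0.exists_oscOn_mul_neg_log_le hp
  refine ⟨exp (A + (pPlus p - 1) * |Real.log K|), exp_pos _, fun b hb => ?_⟩
  have hne : (Ioo 0 b).Nonempty := nonempty_Ioo.mpr hb
  have hosc0 := hp.oscOn_nonneg Ioo_subset_Ioi_self hne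
  have hosc1 := hp.oscOn_le Ioo_subset_Ioi_self hne
  have hr : 0 < min b (1/2) := by positivity
  rw [← neg_sub]
  calc _ ≤ ENNReal.ofReal (exp (oscOn p (Ioo 0 b) * -Real.log (min b (1/2) / K))) :=
        ENNReal.rpow_neg_le_ofReal_exp (div_pos hr hK) hosc0 (hlux b)
    _ ≤ ENNReal.ofReal (exp (A + (pPlus p - 1) * |Real.log K|)) := by
        gcongr
        rw [Real.log_div hr.ne' hK.ne', neg_sub, sub_eq_add_neg, mul_add, add_comm]
        exact add_le_add (hosc b hb) <| (mul_le_mul_of_nonneg_left (le_abs_self _) hosc0).trans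
          (mul_le_mul_of_nonneg_right hosc1 (abs_nonneg _))
end
end

section
/- If a weight w on (0,∞) belongs to A_{∞,0}, then w is not integrable over (0,∞), i.e., ∫₀^∞ w(x)dx = ∞. -/
open MeasureTheory Set ENNReal Real

noncomputable section

/-- the class `A_{∞,0}` on `(0,∞)`. -/
def Ainfty0 (w : ℝ → ℝ) : Prop :=
  (∀ b > (0:ℝ), 0 < (∫⁻ x in Ioo (0:ℝ) b, ENNReal.ofReal (w x)) ∧
      (∫⁻ x in Ioo (0:ℝ) b, ENNReal.ofReal (w x)) < ∞) ∧
  ∃ C > (0:ℝ), ∃ δ > (0:ℝ), ∀ b > (0:ℝ), ∀ E ⊆ Ioo (0:ℝ) b, MeasurableSet E →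
    volume E / ENNReal.ofReal b ≤
      ENNReal.ofReal C *
        ((∫⁻ x in E, ENNReal.ofReal (w x)) /
          ∫⁻ x in Ioo (0:ℝ) b, ENNReal.ofReal (w x)) ^ δ

open Filter Topology

/-! If `w ∈ A_{∞,0}` then, with `E = (a, 2a) ⊂ (0, 2a)`, the condition `1/2 ≤ C (w(E)/w(0,2a))^δ`
says that `w(a, 2a) ≥ η w(0, 2a) ≥ η w(0, 1)` for all `a ≥ 1/2`, with `η > 0` independent of `a`.
So the tails `∫_a^∞ w` stay bounded away from `0`, which is impossible if `∫_0^∞ w < ∞`. -/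

theorem ENNReal.div_rpow_inv_le_of_le_mul_rpow {c K r : ℝ≥0∞} {δ : ℝ} (hδ : 0 < δ)
    (h : c ≤ K * r ^ δ) : (c / K) ^ δ⁻¹ ≤ r := by
  have hle : c / K ≤ r ^ δ := ENNReal.div_le_of_le_mul' h
  calc (c / K) ^ δ⁻¹ ≤ (r ^ δ) ^ δ⁻¹ := ENNReal.rpow_le_rpow hle (inv_nonneg.2 hδ.le)
    _ = r := ENNReal.rpow_rpow_inv hδ.ne' r

theorem tendsto_setLIntegral_Ioi_atTop_zero {μ : Measure ℝ} {f : ℝ → ℝ≥0∞} {a₀ : ℝ}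
    (hf : ∫⁻ x in Ioi a₀, f x ∂μ ≠ ∞) :
    Tendsto (fun a => ∫⁻ x in Ioi a, f x ∂μ) atTop (𝓝 0) := by
  have hν : ∀ a, μ.withDensity f (Ioi a) = ∫⁻ x in Ioi a, f x ∂μ := fun a =>
    withDensity_apply f measurableSet_Ioi
  have hempty : ⋂ a : ℝ, Ioi a = ∅ := iInter_eq_empty_iff.2 fun x => ⟨x, lt_irrefl x⟩
  have h := tendsto_measure_iInter_atTop (μ := μ.withDensity f)
    (fun _ => measurableSet_Ioi.nullMeasurableSet) antitone_Ioi ⟨a₀, (hν a₀).trans_ne hf⟩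
  rw [hempty, measure_empty] at h
  simpa only [Function.comp_def, hν] using h

theorem Ainfty0.exists_mul_le_lintegral_Ioo_two_mul {w : ℝ → ℝ} (hA : Ainfty0 w) :
    ∃ η : ℝ≥0∞, 0 < η ∧ ∀ a > (0:ℝ),
      η * ∫⁻ x in Ioo 0 (2 * a), ENNReal.ofReal (w x) ≤
        ∫⁻ x in Ioo a (2 * a), ENNReal.ofReal (w x) := by
  obtain ⟨hfin, C, hC, δ, hδ, hcond⟩ := hA
  refine ⟨(ENNReal.ofReal (1 / 2) / ENNReal.ofReal C) ^ δ⁻¹,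
    ENNReal.rpow_pos (ENNReal.div_pos (by norm_num) ofReal_ne_top)
      (ENNReal.div_ne_top (by simp) (ENNReal.ofReal_pos.2 hC).ne'), fun a ha => ?_⟩
  have h2a : (0:ℝ) < 2 * a := by linarith
  have hhalf : volume (Ioo a (2 * a)) / ENNReal.ofReal (2 * a) = ENNReal.ofReal (1 / 2) := by
    rw [Real.volume_Ioo, ← ENNReal.ofReal_div_of_pos h2a]
    congr 1
    field_simp
    ring
  have h := hcond (2 * a) h2a (Ioo a (2 * a)) (Ioo_subset_Ioo ha.le le_rfl) measurableSet_Ioo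
  rw [hhalf] at h
  rw [← ENNReal.le_div_iff_mul_le (Or.inl (hfin _ h2a).1.ne') (Or.inl (hfin _ h2a).2.ne)]
  exact ENNReal.div_rpow_inv_le_of_le_mul_rpow hδ h

theorem statement10_general (w : ℝ → ℝ) (hA : Ainfty0 w) :
    (∫⁻ x in Ioi (0:ℝ), ENNReal.ofReal (w x)) = ∞ := by
  by_contra hfin
  obtain ⟨η, hη, hdouble⟩ := hA.exists_mul_le_lintegral_Ioo_two_mul
  have hpos : 0 < η * ∫⁻ x in Ioo 0 1, ENNReal.ofReal (w x) :=
    ENNReal.mul_pos hη.ne' (hA.1 1 one_pos).1.ne'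
  have htail_ge : ∀ᶠ a in atTop,
      η * ∫⁻ x in Ioo 0 1, ENNReal.ofReal (w x) ≤ ∫⁻ x in Ioi a, ENNReal.ofReal (w x) := by
    filter_upwards [eventually_ge_atTop (1 / 2 : ℝ)] with a ha
    calc η * ∫⁻ x in Ioo 0 1, ENNReal.ofReal (w x)
        ≤ η * ∫⁻ x in Ioo 0 (2 * a), ENNReal.ofReal (w x) := by
          have h1 : (1:ℝ) ≤ 2 * a := by linarith
          gcongr
      _ ≤ ∫⁻ x in Ioo a (2 * a), ENNReal.ofReal (w x) := hdouble a (by linarith)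
      _ ≤ ∫⁻ x in Ioi a, ENNReal.ofReal (w x) := lintegral_mono_set Ioo_subset_Ioi_self
  exact (hpos.trans_le (ge_of_tendsto (tendsto_setLIntegral_Ioi_atTop_zero hfin) htail_ge)).false

theorem statement10 (w : ℝ → ℝ) (hw : IsWeight w) (hA : Ainfty0 w) :
    (∫⁻ x in Ioi (0:ℝ), ENNReal.ofReal (w x)) = ∞ :=
  statement10_general w hA
end
end

section
/- Let p(·) ∈ P(0,∞) and 0<λ≤1 with p⁺ < 1/(1−λ) (p⁺<∞ when λ=1), and define q(·) by 1/q(x)=1/p(x)−(1−λ). Then for any weight w on (0,∞): w ∈ A_{p(·),q(·),0} if and only if w^{1/λ} ∈ A_{λq(·),0}. -/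
open MeasureTheory Set ENNReal Real

noncomputable section

/-!
The substitution `v = w ^ (1/λ)` turns one condition into the other. The modular of `g` at level
`ν ^ λ` in the exponent `r` equals the modular of `g ^ (1/λ)` at level `ν` in the exponent `λ r`,
so `‖g‖_{r(·)} = ‖g ^ (1/λ)‖_{λr(·)} ^ λ`. Apply this with `r = q` to `w χ_{(0,b)}` and with
`r = p'` to `w⁻¹ χ_{(0,b)}`; the relation `1/q = 1/p - (1 - λ)` is exactly `λ p' = (λ q)'`.
The product of norms in `A_{p(·),q(·),0}` is then the `λ`-th power of the product in
`A_{λq(·),0}` for `v`, and `C b ^ λ = (C ^ (1/λ) b) ^ λ`.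
-/

lemma eLux_congr {r₁ r₂ : ℝ → ℝ} {g₁ g₂ : ℝ → ℝ≥0∞} (hr : EqOn r₁ r₂ (Ioi 0))
    (hg : EqOn g₁ g₂ (Ioi 0)) : eLux r₁ g₁ = eLux r₂ g₂ := by
  have hI : ∀ μ, ∫⁻ x in Ioi (0:ℝ), (g₁ x / μ) ^ r₁ x = ∫⁻ x in Ioi (0:ℝ), (g₂ x / μ) ^ r₂ x :=
    fun μ => setLIntegral_congr_fun measurableSet_Ioi fun x hx => by rw [hr hx, hg hx]
  simp only [eLux, hI]

lemma eLux_eq_rpow_eLux {lam : ℝ} (hlam : 0 < lam) {r : ℝ → ℝ} (hr : ∀ x ∈ Ioi (0:ℝ), 0 ≤ r x)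
    (g : ℝ → ℝ≥0∞) :
    eLux r g = eLux (fun x => lam * r x) (fun x => g x ^ (1 / lam)) ^ lam := by
  set e := ENNReal.orderIsoRpow lam hlam
  have hmod : ∀ ν : ℝ≥0∞, ∫⁻ x in Ioi (0:ℝ), (g x / ν ^ lam) ^ r x
      = ∫⁻ x in Ioi (0:ℝ), (g x ^ (1 / lam) / ν) ^ (lam * r x) := fun ν =>
    setLIntegral_congr_fun measurableSet_Ioi fun x hx => by
      rw [ENNReal.div_rpow_of_nonneg _ _ (hr x hx),
        ENNReal.div_rpow_of_nonneg _ _ (mul_nonneg hlam.le (hr x hx)),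
        ← ENNReal.rpow_mul, ← ENNReal.rpow_mul, one_div, inv_mul_cancel_left₀ hlam.ne']
  have hset : {ν : ℝ≥0∞ | 0 < ν ∧ ∫⁻ x in Ioi (0:ℝ), (g x ^ (1 / lam) / ν) ^ (lam * r x) ≤ 1}
      = e ⁻¹' {μ | 0 < μ ∧ ∫⁻ x in Ioi (0:ℝ), (g x / μ) ^ r x ≤ 1} := by
    ext ν
    simp only [mem_ofPred_eq, mem_preimage, e, ENNReal.orderIsoRpow_apply, hmod,
      pos_iff_ne_zero, ne_eq, ENNReal.rpow_eq_zero_iff_of_pos hlam]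
  rw [eLux, eLux, hset]
  change _ = e _
  rw [map_sInf, e.image_preimage]

lemma lux_eq_rpow_lux {lam : ℝ} (hlam : 0 < lam) {r : ℝ → ℝ} (hr : ∀ x ∈ Ioi (0:ℝ), 0 ≤ r x)
    {f : ℝ → ℝ} (hf : ∀ x ∈ Ioi (0:ℝ), 0 ≤ f x) :
    lux r f = lux (fun x => lam * r x) (fun x => f x ^ (1 / lam)) ^ lam := by
  rw [lux, lux, eLux_eq_rpow_eLux hlam hr]
  refine congrArg (· ^ lam) (eLux_congr (fun _ _ => rfl) fun x hx => ?_)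
  have hfx := hf x hx
  simp only [abs_of_nonneg hfx, abs_of_nonneg (Real.rpow_nonneg hfx _),
    ENNReal.ofReal_rpow_of_nonneg hfx (one_div_pos.2 hlam).le]

lemma lux_indicator_eq_rpow_lux {lam : ℝ} (hlam : 0 < lam) {r r' : ℝ → ℝ}
    (hr : ∀ x ∈ Ioi (0:ℝ), 0 ≤ r x) (hr' : EqOn (fun x => lam * r x) r' (Ioi 0))
    {s : Set ℝ} {f : ℝ → ℝ} (hf : ∀ x ∈ s, 0 ≤ f x) :
    lux r (indicator s f) = lux r' (indicator s fun x => f x ^ (1 / lam)) ^ lam := by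
  have hcomp : (fun x => indicator s f x ^ (1 / lam)) = indicator s fun x => f x ^ (1 / lam) :=
    (indicator_comp_of_zero (g := fun t : ℝ => t ^ (1 / lam))
      (Real.zero_rpow (one_div_pos.2 hlam).ne')).symm
  rw [lux_eq_rpow_lux hlam hr fun x _ => indicator_nonneg hf x, hcomp, lux, lux,
    eLux_congr hr' fun _ _ => rfl]

lemma pos_of_one_div_eq_one_div_sub {p q c : ℝ} (hp : 0 < p) (hcp : c * p < 1)
    (h : 1 / q = 1 / p - c) : 0 < q := by
  have : c < 1 / p := by rw [lt_div_iff₀ hp]; exact hcp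
  exact one_div_pos.1 (by linarith)

/-- Both sides vanish when `p x = 1`, where `conj` divides by zero and `λ q x = 1`. -/
lemma mul_conj_eq_conj_mul {lam : ℝ} {p q : ℝ → ℝ} {x : ℝ} (hp : 0 < p x) (hq : q x ≠ 0)
    (hpq : 1 / q x = 1 / p x - (1 - lam)) :
    lam * conj p x = conj (fun x => lam * q x) x := by
  have hrel : lam * q x - 1 = (p x - 1) * q x / p x := by
    field_simp at hpq ⊢
    linarith
  simp only [conj]
  rw [hrel, div_div_eq_mul_div, mul_right_comm, mul_div_mul_right _ _ hq, mul_div_assoc]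

lemma exists_rpow_le_ofReal_iff {lam : ℝ} (hlam : 0 < lam) (X : ℝ → ℝ≥0∞) :
    (∃ C > (0:ℝ), ∀ b > (0:ℝ), X b ^ lam ≤ ENNReal.ofReal (C * b ^ lam)) ↔
      ∃ C > (0:ℝ), ∀ b > (0:ℝ), X b ≤ ENNReal.ofReal (C * b ^ (1:ℝ)) := by
  have hpow : ∀ {C b : ℝ}, 0 < C → 0 < b →
      ENNReal.ofReal (C * b ^ lam) = ENNReal.ofReal (C ^ lam⁻¹ * b) ^ lam := fun hC hb => by
    rw [ENNReal.ofReal_rpow_of_nonneg (by positivity) hlam.le,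
      Real.mul_rpow (by positivity) hb.le, Real.rpow_inv_rpow hC.le hlam.ne']
  constructor
  · rintro ⟨C, hC, h⟩
    refine ⟨C ^ lam⁻¹, by positivity, fun b hb => ?_⟩
    rw [Real.rpow_one, ← ENNReal.rpow_le_rpow_iff hlam, ← hpow hC hb]
    exact h b hb
  · rintro ⟨C, hC, h⟩
    refine ⟨C ^ lam, by positivity, fun b hb => ?_⟩
    rw [hpow (by positivity) hb, Real.rpow_rpow_inv hC.le hlam.ne']
    exact ENNReal.rpow_le_rpow ((h b hb).trans_eq (by rw [Real.rpow_one])) hlam.le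

theorem statement13 (lam : ℝ) (hlam : 0 < lam) (hlam1 : lam ≤ 1)
    (p q w : ℝ → ℝ) (hp : IsExponent p) (hpp : (1 - lam) * pPlus p < 1)
    (hq : ∀ x ∈ Ioi (0:ℝ), 1 / q x = 1 / p x - (1 - lam))
    (hw : IsWeight w) :
    Apq0 p q lam w ↔ Ap0 (fun x => lam * q x) (fun x => w x ^ (1 / lam)) := by
  obtain ⟨-, hp1, hpB⟩ := hp
  have hp0 : ∀ x ∈ Ioi (0:ℝ), 0 < p x := fun x hx => one_pos.trans_le (hp1 x hx)
  have hpp' : ∀ x ∈ Ioi (0:ℝ), (1 - lam) * p x < 1 := fun x hx =>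
    (mul_le_mul_of_nonneg_left (le_csSup hpB (mem_image_of_mem p hx)) (by linarith)).trans_lt hpp
  have hq0 : ∀ x ∈ Ioi (0:ℝ), 0 < q x := fun x hx =>
    pos_of_one_div_eq_one_div_sub (hp0 x hx) (hpp' x hx) (hq x hx)
  have hconj0 : ∀ x ∈ Ioi (0:ℝ), 0 ≤ conj p x := fun x hx =>
    div_nonneg (hp0 x hx).le (sub_nonneg.2 (hp1 x hx))
  have hw0 : ∀ b, ∀ x ∈ Ioo (0:ℝ) b, 0 ≤ w x := fun b x hx => hw.2.1 x hx.1
  have hnorm : ∀ b, lux q (indicator (Ioo 0 b) w) *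
        lux (conj p) (indicator (Ioo 0 b) fun y => (w y)⁻¹) =
      (lux (fun x => lam * q x) (indicator (Ioo 0 b) fun x => w x ^ (1 / lam)) *
        lux (conj fun x => lam * q x)
          (indicator (Ioo 0 b) fun y => (w y ^ (1 / lam))⁻¹)) ^ lam := by
    intro b
    rw [ENNReal.mul_rpow_of_nonneg _ _ hlam.le,
      lux_indicator_eq_rpow_lux hlam (fun x hx => (hq0 x hx).le) (fun _ _ => rfl) (hw0 b),
      lux_indicator_eq_rpow_lux hlam hconj0
        (fun x hx => mul_conj_eq_conj_mul (hp0 x hx) (hq0 x hx).ne' (hq x hx))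
        fun x hx => inv_nonneg.2 (hw0 b x hx),
      indicator_congr fun x hx => Real.inv_rpow (hw0 b x hx) _]
  simp only [Ap0, Apq0, hnorm]
  exact exists_rpow_le_ofReal_iff hlam _

end
end

section
/- Let p(·) ∈ P(0,∞), 0<λ<1 with p⁺<1/(1−λ), and define q(·) by 1/q(x)=1/p(x)−(1−λ). Let w be a weight on (0,∞) and let f be a non-negative measurable function with ∫₀^∞ f(y)^{p(y)}dy < ∞. Set g(y)=f(y)^{p(y)/q(y)}w(y)^{−1}. Then for every x ∈ (0,∞), S_λ(f/w)(x) ≤ [S(g^{1/λ})(x)]^λ · (∫₀^∞ f(y)^{p(y)}dy)^{1−λ}, where S=S₁ is the Stieltjes transform with λ=1. -/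
open MeasureTheory Set ENNReal Real

noncomputable section

/-! Since `p/q = 1 - (1 - λ) p`, the kernel of `S_λ(f/w)(x)` factors exactly as
`(g^{1/λ}/(x+y))^λ · (f^p)^{1-λ}`, and Hölder's inequality with exponents `1/λ` and `1/(1-λ)`
gives the bound. -/

theorem div_div_rpow_eq_mul_rpow {a b c lam : ℝ} (p : ℝ) (ha : 0 ≤ a) (hb : 0 ≤ b)
    (hc : 0 < c) (hlam : 0 < lam) :
    a / b / c ^ lam =
      ((a ^ (1 - (1 - lam) * p) * b⁻¹) ^ (1 / lam) / c) ^ lam * (a ^ p) ^ (1 - lam) := by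
  have hX : 0 ≤ a ^ (1 - (1 - lam) * p) * b⁻¹ := by positivity
  have hexp : 1 - (1 - lam) * p + p * (1 - lam) = 1 := by ring
  have ha_split : a ^ (1 - (1 - lam) * p) * a ^ (p * (1 - lam)) = a := by
    rw [← Real.rpow_add' ha (by rw [hexp]; exact one_ne_zero), hexp, Real.rpow_one]
  rw [Real.div_rpow (by positivity) hc.le, ← Real.rpow_mul hX, one_div_mul_cancel hlam.ne',
    Real.rpow_one, ← Real.rpow_mul ha]
  calc a / b / c ^ lam
      = a ^ (1 - (1 - lam) * p) * a ^ (p * (1 - lam)) * b⁻¹ / c ^ lam := by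
        rw [ha_split, div_eq_mul_inv a b]
    _ = _ := by ring

theorem ofReal_div_rpow_eq_mul_rpow {a b c lam : ℝ} (p : ℝ) (ha : 0 ≤ a) (hb : 0 ≤ b)
    (hc : 0 < c) (hlam : 0 < lam) (hlam1 : lam ≤ 1) :
    ENNReal.ofReal (|a / b| / c ^ lam) =
      ENNReal.ofReal (|(a ^ (1 - (1 - lam) * p) * b⁻¹) ^ (1 / lam)| / c) ^ lam *
        ENNReal.ofReal (a ^ p) ^ (1 - lam) := by
  have hX : 0 ≤ (a ^ (1 - (1 - lam) * p) * b⁻¹) ^ (1 / lam) := by positivity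
  rw [abs_of_nonneg (div_nonneg ha hb), abs_of_nonneg hX,
    ENNReal.ofReal_rpow_of_nonneg (by positivity) hlam.le,
    ENNReal.ofReal_rpow_of_nonneg (by positivity) (by linarith),
    ← ENNReal.ofReal_mul (by positivity), div_div_rpow_eq_mul_rpow p ha hb hc hlam]

theorem opS_div_le_opS_one_rpow_mul {lam : ℝ} (hlam : 0 < lam) (hlam1 : lam ≤ 1)
    {p f w : ℝ → ℝ} (hp : Measurable p) (hf : Measurable f) (hw : Measurable w)
    (hf0 : ∀ y ∈ Ioi (0:ℝ), 0 ≤ f y) (hw0 : ∀ y ∈ Ioi (0:ℝ), 0 ≤ w y) {x : ℝ} (hx : 0 ≤ x) :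
    opS lam (fun y => f y / w y) x ≤
      opS 1 (fun y => (f y ^ (1 - (1 - lam) * p y) * (w y)⁻¹) ^ (1 / lam)) x ^ lam *
        (∫⁻ y in Ioi (0:ℝ), ENNReal.ofReal (f y ^ p y)) ^ (1 - lam) := by
  simp only [opS, Real.rpow_one]
  calc ∫⁻ y in Ioi (0:ℝ), ENNReal.ofReal (|f y / w y| / (x + y) ^ lam)
      = ∫⁻ y in Ioi (0:ℝ),
          ENNReal.ofReal (|(f y ^ (1 - (1 - lam) * p y) * (w y)⁻¹) ^ (1 / lam)| / (x + y)) ^ lam *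
            ENNReal.ofReal (f y ^ p y) ^ (1 - lam) :=
        setLIntegral_congr_fun measurableSet_Ioi fun y hy =>
          ofReal_div_rpow_eq_mul_rpow (p y) (hf0 y hy) (hw0 y hy) (by linarith [mem_Ioi.1 hy])
            hlam hlam1
    _ ≤ _ := ENNReal.lintegral_mul_norm_pow_le (by fun_prop) (by fun_prop) hlam.le
        (by linarith) (by ring)

theorem statement14_general (lam : ℝ) (hlam : 0 < lam) (hlam1 : lam < 1)
    (p q w f : ℝ → ℝ) (hp : IsExponent p)
    (hq : ∀ x ∈ Ioi (0:ℝ), 1 / q x = 1 / p x - (1 - lam))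
    (hw : IsWeight w) (hf : Measurable f) (hf0 : ∀ y ∈ Ioi (0:ℝ), 0 ≤ f y) :
    ∀ x ∈ Ioi (0:ℝ),
      opS lam (fun y => f y / w y) x ≤
        (opS 1 (fun y => (f y ^ (p y / q y) * (w y)⁻¹) ^ (1 / lam)) x) ^ lam *
          (∫⁻ y in Ioi (0:ℝ), ENNReal.ofReal (f y ^ p y)) ^ (1 - lam) := by
  intro x hx
  have hpq : ∀ y ∈ Ioi (0:ℝ), p y / q y = 1 - (1 - lam) * p y := fun y hy => by
    rw [div_eq_mul_one_div, hq y hy, mul_sub,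
      mul_one_div_cancel (by linarith [hp.2.1 y hy]), mul_comm]
  have hg : opS 1 (fun y => (f y ^ (p y / q y) * (w y)⁻¹) ^ (1 / lam)) x =
      opS 1 (fun y => (f y ^ (1 - (1 - lam) * p y) * (w y)⁻¹) ^ (1 / lam)) x :=
    setLIntegral_congr_fun measurableSet_Ioi fun y hy => by simp only [hpq y hy]
  rw [hg]
  exact opS_div_le_opS_one_rpow_mul hlam hlam1.le hp.1 hf hw.1 hf0 hw.2.1 (le_of_lt hx)

theorem statement14 (lam : ℝ) (hlam : 0 < lam) (hlam1 : lam < 1)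
    (p q w f : ℝ → ℝ) (hp : IsExponent p) (hpp : (1 - lam) * pPlus p < 1)
    (hq : ∀ x ∈ Ioi (0:ℝ), 1 / q x = 1 / p x - (1 - lam))
    (hw : IsWeight w) (hf : Measurable f) (hf0 : ∀ y ∈ Ioi (0:ℝ), 0 ≤ f y)
    (hI : (∫⁻ y in Ioi (0:ℝ), ENNReal.ofReal (f y ^ p y)) ≠ ∞) :
    ∀ x ∈ Ioi (0:ℝ),
      opS lam (fun y => f y / w y) x ≤
        (opS 1 (fun y => (f y ^ (p y / q y) * (w y)⁻¹) ^ (1 / lam)) x) ^ lam *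
          (∫⁻ y in Ioi (0:ℝ), ENNReal.ofReal (f y ^ p y)) ^ (1 - lam) :=
  statement14_general lam hlam hlam1 p q w f hp hq hw hf hf0

end
end
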